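/- arXiv:2504.21396 — 3 statements merged into one kernel-verified Lean document; each statement's English description precedes it below -/
import Mathlib

section
/- Let 𝒜 be a complex unital Banach algebra and let a ∈ 𝒜 be an element whose spectrum σ(a) does not intersect the half-line (-∞, 0] ⊆ ℂ. Then there exists at most one element b ∈ 𝒜 such that b² = a and σ(b) is contained in the closed right half plane {λ ∈ ℂ : Re λ ≥ 0}. -/
open ContinuousLinearMap in
/-- The spectrum of the left-multiplication operator is contained in the spectrum of the
element. -/
lemma spectrum_mulLeft_subset {𝒜 : Type*} [NormedRing 𝒜] [NormedAlgebra ℂ 𝒜]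
    [CompleteSpace 𝒜] (b : 𝒜) :
    spectrum ℂ (mul ℂ 𝒜 b) ⊆ spectrum ℂ b := by
  intro z hz
  by_contra h
  rw [spectrum.notMem_iff] at h
  apply (spectrum.notMem_iff).mpr ?_ hz
  obtain ⟨c, hc⟩ := h
  have key : ∀ p q : 𝒜, mul ℂ 𝒜 p * mul ℂ 𝒜 q = mul ℂ 𝒜 (p * q) := by
    intro p q; ext x; simp [mul_assoc]
  have halg : algebraMap ℂ (𝒜 →L[ℂ] 𝒜) z - mul ℂ 𝒜 b = mul ℂ 𝒜 (algebraMap ℂ 𝒜 z - b) := by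
    ext x
    simp [Algebra.algebraMap_eq_smul_one, smul_mul_assoc]
  refine ⟨⟨algebraMap ℂ (𝒜 →L[ℂ] 𝒜) z - mul ℂ 𝒜 b, mul ℂ 𝒜 ↑c⁻¹, ?_, ?_⟩, rfl⟩
  · rw [halg, key, ← hc, c.mul_inv]
    ext x; simp
  · rw [halg, key, ← hc, c.inv_mul]
    ext x; simp

open ContinuousLinearMap in
/-- The spectrum of the right-multiplication operator is contained in the spectrum of the
element. -/
lemma spectrum_mulRight_subset {𝒜 : Type*} [NormedRing 𝒜] [NormedAlgebra ℂ 𝒜]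
    [CompleteSpace 𝒜] (b : 𝒜) :
    spectrum ℂ ((mul ℂ 𝒜).flip b) ⊆ spectrum ℂ b := by
  intro z hz
  by_contra h
  rw [spectrum.notMem_iff] at h
  apply (spectrum.notMem_iff).mpr ?_ hz
  obtain ⟨c, hc⟩ := h
  have key : ∀ p q : 𝒜, (mul ℂ 𝒜).flip p * (mul ℂ 𝒜).flip q = (mul ℂ 𝒜).flip (q * p) := by
    intro p q; ext x; simp [mul_assoc]
  have halg : algebraMap ℂ (𝒜 →L[ℂ] 𝒜) z - (mul ℂ 𝒜).flip b
      = (mul ℂ 𝒜).flip (algebraMap ℂ 𝒜 z - b) := by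
    ext x
    simp [Algebra.algebraMap_eq_smul_one, mul_smul_comm]
  refine ⟨⟨algebraMap ℂ (𝒜 →L[ℂ] 𝒜) z - (mul ℂ 𝒜).flip b, (mul ℂ 𝒜).flip ↑c⁻¹, ?_, ?_⟩, rfl⟩
  · rw [halg, key, ← hc, c.inv_mul]
    ext x; simp
  · rw [halg, key, ← hc, c.mul_inv]
    ext x; simp

/-- A compact set in `ℂ` whose frontier lies in the open right half-plane lies entirely in
the open right half-plane. -/
lemma compact_subset_of_frontier_subset {K : Set ℂ} (hK : IsCompact K)
    (hf : frontier K ⊆ {z : ℂ | 0 < z.re}) : K ⊆ {z : ℂ | 0 < z.re} := by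
  intro w hw
  by_contra hre
  rw [Set.mem_setOf_eq, not_lt] at hre
  set T : Set ℝ := {t : ℝ | 0 ≤ t ∧ w - (t : ℂ) ∈ K} with hT
  have hTne : T.Nonempty := ⟨0, le_refl 0, by simpa using hw⟩
  have hTclosed : IsClosed T := by
    apply IsClosed.inter isClosed_Ici
    exact IsClosed.preimage (by continuity) hK.isClosed
  have hTbdd : Bornology.IsBounded T := by
    obtain ⟨C, hC⟩ := hK.isBounded.subset_ball 0
    apply (Metric.isBounded_Icc (0 : ℝ) (C + ‖w‖ + 1)).subset
    intro t ⟨ht0, htK⟩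
    refine ⟨ht0, ?_⟩
    have := hC htK
    rw [Metric.mem_ball, dist_zero_right] at this
    have h1 : (t : ℝ) = ‖(t : ℂ)‖ := by
      rw [Complex.norm_real, Real.norm_eq_abs, abs_of_nonneg ht0]
    have h2 : ‖(t : ℂ)‖ ≤ ‖w - (t : ℂ)‖ + ‖w‖ := by
      calc ‖(t : ℂ)‖ = ‖w - (w - (t : ℂ))‖ := by ring_nf
        _ ≤ ‖w‖ + ‖w - (t:ℂ)‖ := norm_sub_le _ _
        _ = ‖w - (t : ℂ)‖ + ‖w‖ := by ring
    nlinarith [this, h2, h1]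
  have hTcpt : IsCompact T := Metric.isCompact_of_isClosed_isBounded hTclosed hTbdd
  set t₀ := sSup T with ht₀
  have ht₀T : t₀ ∈ T := hTcpt.sSup_mem hTne
  have hfront : w - (t₀ : ℂ) ∈ frontier K := by
    rw [frontier, hK.isClosed.closure_eq, Set.mem_diff]
    refine ⟨ht₀T.2, fun hint => ?_⟩
    obtain ⟨ε, hε, hball⟩ := Metric.isOpen_iff.mp isOpen_interior _ hint
    have hmem : w - ((t₀ + ε / 2 : ℝ) : ℂ) ∈ K := by
      apply interior_subset
      apply hball
      rw [Metric.mem_ball]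
      simp only [Complex.dist_eq]
      have : w - ((t₀ + ε/2 : ℝ) : ℂ) - (w - (t₀:ℂ)) = -(ε/2 : ℝ) := by
        push_cast; ring
      rw [this]
      simp [abs_of_pos hε]
      linarith
    have : t₀ + ε / 2 ∈ T := ⟨by linarith [ht₀T.1], hmem⟩
    have := le_csSup hTbdd.bddAbove this
    linarith
  have := hf hfront
  rw [Set.mem_setOf_eq, Complex.sub_re, Complex.ofReal_re] at this
  linarith [ht₀T.1]

/-- If `b ^ 2 = a`, the spectrum of `a` avoids `(-∞, 0]` and the spectrum of `b` lies in the
closed right half-plane, then it lies in the open right half-plane. -/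
lemma spectrum_subset_open_halfplane {𝒜 : Type*} [NormedRing 𝒜] [NormedAlgebra ℂ 𝒜]
    [CompleteSpace 𝒜] {a b : 𝒜}
    (ha : ∀ z ∈ spectrum ℂ a, ¬(z.re ≤ 0 ∧ z.im = 0))
    (hb : b ^ 2 = a) (hbspec : ∀ z ∈ spectrum ℂ b, 0 ≤ z.re) :
    spectrum ℂ b ⊆ {z : ℂ | 0 < z.re} := by
  intro z hz
  rcases lt_or_eq_of_le (hbspec z hz) with h | h
  · exact h
  · exfalso
    have hz2 : z ^ 2 ∈ spectrum ℂ a := by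
      rw [← hb]
      exact spectrum.pow_image_subset b 2 ⟨z, hz, rfl⟩
    refine ha (z ^ 2) hz2 ⟨?_, ?_⟩
    · simp [pow_two, Complex.mul_re, ← h]
      nlinarith [sq_nonneg z.im]
    · simp [pow_two, Complex.mul_im, ← h]

/-- In a complex Banach algebra, the sum of two commuting elements whose spectra lie in the
open right half-plane is invertible. -/
lemma isUnit_add_of_commute_of_spectra {A : Type*} [NormedRing A] [NormedAlgebra ℂ A]
    [CompleteSpace A] {u v : A} (huv : u * v = v * u)
    (hu : spectrum ℂ u ⊆ {z : ℂ | 0 < z.re}) (hv : spectrum ℂ v ⊆ {z : ℂ | 0 < z.re}) :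
    IsUnit (u + v) := by
  classical
  -- bicommutant of {u, v}, a closed commutative subalgebra
  set C₁ : Subalgebra ℂ A := Subalgebra.centralizer ℂ {u, v} with hC₁
  set B : Subalgebra ℂ A := Subalgebra.centralizer ℂ (C₁ : Set A) with hB
  have huB : u ∈ B := by
    rw [hB, Subalgebra.mem_centralizer_iff]
    intro g hg
    exact (Subalgebra.mem_centralizer_iff ℂ |>.mp hg u (by simp)).symm
  have hvB : v ∈ B := by
    rw [hB, Subalgebra.mem_centralizer_iff]
    intro g hg
    exact (Subalgebra.mem_centralizer_iff ℂ |>.mp hg v (by simp)).symm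
  have hBC₁ : (B : Set A) ⊆ (C₁ : Set A) := by
    apply Subalgebra.centralizer_le
    intro g hg
    rw [SetLike.mem_coe, Subalgebra.mem_centralizer_iff]
    rintro g' (rfl | rfl) <;> rcases hg with rfl | rfl <;> first | rfl | exact huv | exact huv.symm
  have hBcomm : ∀ x y : B, x * y = y * x := by
    intro x y
    have hyC : (y : A) ∈ C₁ := hBC₁ y.2
    have h := Subalgebra.mem_centralizer_iff ℂ |>.mp x.2 (y : A) hyC
    exact Subtype.ext (by simpa using h.symm)
  haveI hBclosed : IsClosed (B : Set A) := by
    have : (B : Set A) = ⋂ g ∈ (C₁ : Set A), {x | g * x = x * g} := by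
      ext x
      simp only [Set.mem_iInter, Set.mem_setOf_eq, SetLike.mem_coe]
      exact ⟨fun hx g hg => Subalgebra.mem_centralizer_iff ℂ |>.mp hx g hg,
        fun h => Subalgebra.mem_centralizer_iff ℂ |>.mpr h⟩
    rw [this]
    exact isClosed_biInter fun g _ => isClosed_eq (continuous_mul_left g) (continuous_mul_right g)
  haveI : CompleteSpace B := hBclosed.completeSpace_coe
  letI : NormedCommRing B := { (inferInstance : NormedRing B) with mul_comm := hBcomm }
  -- the spectra of `u` and `v` relative to `B` lie in the open right half-plane
  have hspecB : ∀ (w : A) (hw : w ∈ B), spectrum ℂ w ⊆ {z : ℂ | 0 < z.re} →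
      spectrum ℂ (⟨w, hw⟩ : B) ⊆ {z : ℂ | 0 < z.re} := by
    intro w hw hspec
    apply compact_subset_of_frontier_subset (spectrum.isCompact _)
    intro z hz
    exact hspec (Subalgebra.frontier_spectrum B (⟨w, hw⟩ : B) hz)
  have hub := hspecB u huB hu
  have hvb := hspecB v hvB hv
  -- `u + v` is invertible in `B`, hence in `A`
  have hkeyB : IsUnit ((⟨u, huB⟩ : B) + ⟨v, hvB⟩) := by
    by_contra hnu
    obtain ⟨f, hf⟩ := WeakDual.CharacterSpace.exists_apply_eq_zero hnu
    rw [map_add] at hf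
    have h1 : f ⟨u, huB⟩ ∈ spectrum ℂ (⟨u, huB⟩ : B) := AlgHom.apply_mem_spectrum f _
    have h2 : f ⟨v, hvB⟩ ∈ spectrum ℂ (⟨v, hvB⟩ : B) := AlgHom.apply_mem_spectrum f _
    have r1 := hub h1
    have r2 := hvb h2
    rw [Set.mem_setOf_eq] at r1 r2
    have : (f ⟨u, huB⟩ + f ⟨v, hvB⟩).re = 0 := by rw [hf]; simp
    rw [Complex.add_re] at this
    linarith
  have := hkeyB.map B.val
  simpa using this

/-- Uniqueness of square roots in a complex unital Banach algebra:
if the spectrum of `a` avoids the half-line `(-∞, 0] ⊆ ℂ`, then there is at most one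
element `b` with `b ^ 2 = a` whose spectrum lies in the closed right half plane. -/
theorem square_root_unique {𝒜 : Type*} [NormedRing 𝒜] [NormedAlgebra ℂ 𝒜]
    [CompleteSpace 𝒜] (a : 𝒜)
    (ha : ∀ z ∈ spectrum ℂ a, ¬(z.re ≤ 0 ∧ z.im = 0))
    (b b' : 𝒜)
    (hb : b ^ 2 = a) (hbspec : ∀ z ∈ spectrum ℂ b, 0 ≤ z.re)
    (hb' : b' ^ 2 = a) (hb'spec : ∀ z ∈ spectrum ℂ b', 0 ≤ z.re) :
    b = b' := by
  set u : 𝒜 →L[ℂ] 𝒜 := ContinuousLinearMap.mul ℂ 𝒜 b with hu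
  set v : 𝒜 →L[ℂ] 𝒜 := (ContinuousLinearMap.mul ℂ 𝒜).flip b' with hv
  have huv : u * v = v * u := by
    ext x
    simp [hu, hv, mul_assoc]
  have hkey : IsUnit (u + v) :=
    isUnit_add_of_commute_of_spectra huv
      ((spectrum_mulLeft_subset b).trans (spectrum_subset_open_halfplane ha hb hbspec))
      ((spectrum_mulRight_subset b').trans (spectrum_subset_open_halfplane ha hb' hb'spec))
  have happ : (u + v) (b - b') = 0 := by
    simp only [ContinuousLinearMap.add_apply, hu, hv, ContinuousLinearMap.flip_apply,
      ContinuousLinearMap.mul_apply']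
    rw [mul_sub, sub_mul]
    have hsq : b * b - b' * b' = 0 := by
      rw [← pow_two, ← pow_two, hb, hb', sub_self]
    linear_combination (norm := abel) hsq
  obtain ⟨w, hw⟩ := hkey
  have hzero : b - b' = 0 := by
    have h1 : (↑w⁻¹ * (u + v)) (b - b') = (1 : 𝒜 →L[ℂ] 𝒜) (b - b') := by
      rw [← hw, w.inv_mul]
    rw [ContinuousLinearMap.mul_apply, happ, map_zero] at h1
    simpa using h1.symm
  exact sub_eq_zero.mp hzero
end

section
/- Let S ⊆ ℂ be a convex set contained in the sector {z ∈ ℂ : |Im z| ≤ Re z} (equivalently, |arg z| ≤ π/4 together with z = 0). Then the complement ℂ \ closure(S) of the closure of S is a preconnected subset of ℂ. -/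
open Set

lemma sector_aux_segment {a : ℂ} (ha : a.re < |a.im|) :
    segment ℝ (-1 : ℂ) a ⊆ {z : ℂ | z.re < |z.im|} := by
  rintro w ⟨s, t, hs, ht, hst, rfl⟩
  simp only [mem_setOf_eq, Complex.add_re, Complex.add_im, Complex.smul_re, Complex.smul_im,
    Complex.neg_re, Complex.neg_im, Complex.one_re, Complex.one_im, mul_zero, neg_zero,
    add_zero, zero_add, mul_neg, mul_one, smul_eq_mul, smul_zero]
  rw [abs_mul, abs_of_nonneg ht]
  nlinarith [mul_le_mul_of_nonneg_left ha.le ht, abs_nonneg a.im]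

lemma sectorCompl_preconnected : IsPreconnected {z : ℂ | z.re < |z.im|} := by
  have h : {z : ℂ | z.re < |z.im|} =
      ⋃₀ ((fun a => segment ℝ (-1 : ℂ) a) '' {z : ℂ | z.re < |z.im|}) := by
    ext w
    constructor
    · intro hw; exact ⟨_, ⟨w, hw, rfl⟩, right_mem_segment ℝ _ _⟩
    · rintro ⟨_, ⟨a, ha, rfl⟩, hw⟩; exact sector_aux_segment ha hw
  rw [h]
  refine isPreconnected_sUnion (-1) _ ?_ ?_
  · rintro _ ⟨a, ha, rfl⟩; exact left_mem_segment ℝ _ _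
  · rintro _ ⟨a, ha, rfl⟩; exact (convex_segment _ _).isPreconnected

/-- If `S ⊆ ℂ` is convex and contained in the sector `{z : |Im z| ≤ Re z}` (i.e. the sector
`|arg z| ≤ π/4` together with `0`), then the complement of the closure of `S` is
preconnected. -/
theorem compl_closure_preconnected_of_convex_sector (S : Set ℂ)
    (hconv : Convex ℝ S) (hsec : S ⊆ {z : ℂ | |z.im| ≤ z.re}) :
    IsPreconnected (closure S)ᶜ := by
  set C := closure S with hCdef
  have hCc : Convex ℝ C := hconv.closure
  have hCsec : C ⊆ {z : ℂ | |z.im| ≤ z.re} :=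
    closure_minimal hsec
      (isClosed_le (continuous_abs.comp Complex.continuous_im) Complex.continuous_re)
  set A : Set ℂ := {z : ℂ | z.re < |z.im|} with hAdef
  have hAC : A ⊆ Cᶜ := by
    intro w hw hwC
    have h1 : |w.im| ≤ w.re := hCsec hwC
    have h2 : w.re < |w.im| := hw
    linarith
  have hApre : IsPreconnected A := sectorCompl_preconnected
  have hneg1A : (-1 : ℂ) ∈ A := by
    simp [hAdef]
  have key : ∀ z ∈ Cᶜ, ∃ u : Set ℂ, IsPreconnected u ∧ (-1 : ℂ) ∈ u ∧ z ∈ u ∧ u ⊆ Cᶜ := by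
    intro z hz
    by_cases hzA : z ∈ A
    · exact ⟨A, hApre, hneg1A, hzA, hAC⟩
    · obtain ⟨f, u, hfz, hfb⟩ := geometric_hahn_banach_point_closed hCc isClosed_closure hz
      set H : Set ℂ := {w | f w < u} with hHdef
      have hHC : H ⊆ Cᶜ := fun w hw hwC => absurd (hfb w hwC) (not_lt.2 hw.le)
      have hHconv : Convex ℝ H := convex_halfSpace_lt f.toLinearMap.isLinear u
      obtain ⟨w₀, hw₀H, hw₀A⟩ : ∃ w₀, w₀ ∈ H ∧ w₀ ∈ A := by
        by_cases hf : f = (0 : ℂ →L[ℝ] ℝ)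
        · refine ⟨-1, ?_, hneg1A⟩
          simpa [hHdef, hf] using (by simpa [hf] using hfz : (0:ℝ) < u)
        · set d : ℂ := (f Complex.I) • (1 : ℂ) - (f 1) • Complex.I with hd
          have hfd : f d = 0 := by
            rw [hd, map_sub, map_smul, map_smul, smul_eq_mul, smul_eq_mul]
            ring
          have hdre : d.re = f Complex.I := by simp [hd]
          have hdim : d.im = -(f 1) := by simp [hd]
          have hd0 : d ≠ 0 := by
            intro h
            apply hf
            have h1 : f 1 = 0 := by
              have := congrArg Complex.im h
              simpa [hdim] using this
            have hI : f Complex.I = 0 := by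
              have := congrArg Complex.re h
              simpa [hdre] using this
            ext w
            have hw : w = w.re • (1 : ℂ) + w.im • Complex.I := by
              apply Complex.ext <;> simp
            rw [hw, map_add, map_smul, map_smul, h1, hI]
            simp
          by_cases hre : d.re ≠ 0
          · refine ⟨z + ((-1 - z.re) / d.re) • d, ?_, ?_⟩
            · simp only [hHdef, mem_setOf_eq, map_add, map_smul, hfd, smul_eq_mul, mul_zero,
                add_zero]
              exact hfz
            · simp only [hAdef, mem_setOf_eq, Complex.add_re, Complex.smul_re, smul_eq_mul]
              rw [div_mul_cancel₀ _ hre]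
              have : z.re + (-1 - z.re) = -1 := by ring
              rw [this]
              have := abs_nonneg (z + ((-1 - z.re) / d.re) • d).im
              linarith
          · push_neg at hre
            have him : d.im ≠ 0 := by
              intro h
              exact hd0 (Complex.ext (by simp [hre]) (by simp [h]))
            refine ⟨z + ((|z.re| + 1 - z.im) / d.im) • d, ?_, ?_⟩
            · simp only [hHdef, mem_setOf_eq, map_add, map_smul, hfd, smul_eq_mul, mul_zero,
                add_zero]
              exact hfz
            · simp only [hAdef, mem_setOf_eq, Complex.add_re, Complex.add_im, Complex.smul_re,
                Complex.smul_im, hre, mul_zero, add_zero, smul_eq_mul, smul_zero]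
              rw [div_mul_cancel₀ _ him]
              have h1 : z.im + (|z.re| + 1 - z.im) = |z.re| + 1 := by ring
              rw [h1]
              have h2 : z.re ≤ |z.re| := le_abs_self _
              have h3 : (0:ℝ) ≤ |z.re| + 1 := by positivity
              rw [abs_of_nonneg h3]
              linarith
      refine ⟨H ∪ A, IsPreconnected.union w₀ hw₀H hw₀A hHconv.isPreconnected hApre,
        Or.inr hneg1A, Or.inl hfz, union_subset hHC hAC⟩
  have hEq : Cᶜ = ⋃₀ {u : Set ℂ | IsPreconnected u ∧ (-1 : ℂ) ∈ u ∧ u ⊆ Cᶜ} := by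
    apply Subset.antisymm
    · intro z hz
      obtain ⟨u, h1, h2, h3, h4⟩ := key z hz
      exact ⟨u, ⟨h1, h2, h4⟩, h3⟩
    · rintro z ⟨u, ⟨_, _, hu⟩, hz⟩
      exact hu hz
  rw [hEq]
  exact isPreconnected_sUnion (-1) _ (fun s hs => hs.2.1) (fun s hs => hs.1)
end

section
/- Let H be a complex Hilbert space and let B be a bounded linear operator on H such that Re ⟪f, B f⟫ ≤ 0 for all f ∈ H. Then for every real x ≥ 0, the operator exponential exp(x • B) satisfies ‖exp(x • B)‖ ≤ 1. -/
/-! The trajectory `u t = exp (t • B) f` solves `u' = B u`, so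
`d/dt ‖u t‖² = 2 Re ⟪u t, B (u t)⟫ ≤ 0`: the norm of the trajectory is nonincreasing. -/

open NormedSpace RCLike

open scoped InnerProductSpace

theorem antitone_norm_of_re_inner_deriv_nonpos {𝕜 E : Type*} [RCLike 𝕜] [NormedAddCommGroup E]
    [InnerProductSpace 𝕜 E] [NormedSpace ℝ E] {u u' : ℝ → E}
    (hu : ∀ t, HasDerivAt u (u' t) t) (hu' : ∀ t, re ⟪u t, u' t⟫_𝕜 ≤ 0) :
    Antitone fun t => ‖u t‖ := by
  have hsq : ∀ t, HasDerivAt (fun s => ‖u s‖ ^ 2) (2 * re ⟪u t, u' t⟫_𝕜) t := fun t => by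
    have h := (reCLM (K := 𝕜)).hasFDerivAt.comp_hasDerivAt t ((hu t).inner 𝕜 (hu t))
    simp only [Function.comp_def, reCLM_apply, map_add, inner_re_symm (u' t) (u t),
      ← norm_sq_eq_re_inner] at h
    rwa [two_mul]
  have hanti : Antitone fun t => ‖u t‖ ^ 2 :=
    antitone_of_hasDerivAt_nonpos hsq fun t => by
      simp only [Pi.zero_apply]
      linarith [hu' t]
  exact fun s t hst => (pow_le_pow_iff_left₀ (norm_nonneg _) (norm_nonneg _) two_ne_zero).1
    (hanti hst)

section

variable {H : Type*} [NormedAddCommGroup H] [InnerProductSpace ℂ H] [CompleteSpace H]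

theorem hasDerivAt_exp_smul_apply (B : H →L[ℂ] H) (f : H) (t : ℝ) :
    HasDerivAt (fun s : ℝ => exp (s • B) f) (B (exp (t • B) f)) t :=
  ((ContinuousLinearMap.apply ℂ H f).restrictScalars ℝ).hasFDerivAt.comp_hasDerivAt t
    (hasDerivAt_exp_smul_const' B t)

theorem norm_exp_smul_apply_le_of_re_inner_nonpos {B : H →L[ℂ] H}
    (hB : ∀ f, re ⟪f, B f⟫_ℂ ≤ 0) (f : H) {t : ℝ} (ht : 0 ≤ t) :
    ‖exp (t • B) f‖ ≤ ‖f‖ := by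
  have hanti := antitone_norm_of_re_inner_deriv_nonpos (hasDerivAt_exp_smul_apply B f)
    fun s => hB (exp (s • B) f)
  simpa using hanti ht

end

/-- Lumer–Phillips contraction estimate for bounded operators: if the numerical range of a
bounded operator `B` on a complex Hilbert space lies in the closed left half plane, then
the semigroup `x ↦ exp (x • B)` is contractive for `x ≥ 0`. -/
theorem exp_norm_le_one_of_dissipative {H : Type*} [NormedAddCommGroup H]
    [InnerProductSpace ℂ H] [CompleteSpace H] (B : H →L[ℂ] H)
    (hB : ∀ f : H, (inner ℂ f (B f) : ℂ).re ≤ 0) :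
    ∀ x : ℝ, 0 ≤ x → ‖NormedSpace.exp (x • B)‖ ≤ 1 := fun x hx =>
  ContinuousLinearMap.opNorm_le_bound _ zero_le_one fun f => by
    simpa using norm_exp_smul_apply_le_of_re_inner_nonpos hB f hx
end
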